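/- Let κ > 0. With h_x = (6−κ)/(2κ), h_y = (κ−2)/(2κ) and Z(x,y) = (x−y)^{−2/κ} on {(x,y) ∈ ℝ² : x > y}, one has (x² ∂/∂x + y² ∂/∂y + 2x h_x + 2y h_y) Z = ((4−κ)/κ)·(x−y)^{1−2/κ}, and this function W(x,y) = ((4−κ)/κ)(x−y)^{1−2/κ} satisfies (∂/∂x + ∂/∂y) W = 0. In particular, for κ ≠ 4, the highest weight module generated by the SLE_κ(ρ=−2) partition function Z contains a nonzero singular vector L₋₁Z at grade one. -/

import Mathlib

/-- The SLE_κ(ρ=-2) partition function. -/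
noncomputable def Z6 (κ x y : ℝ) : ℝ := (x - y) ^ (-2 / κ)

/-- The grade-one singular vector `L₋₁ Z`. -/
noncomputable def W6 (κ x y : ℝ) : ℝ := (4 - κ) / κ * (x - y) ^ (1 - 2 / κ)

/-!
Both `Z` and `W` are functions `g (x - y)` of `t = x - y` alone, so `∂ₓ + ∂_y` kills them, and on
such a function `x² ∂ₓ + y² ∂_y` acts as `(x + y) · t g'(t)`. For `g t = t ^ p` with `p = -2/κ`,
Euler's relation `t g'(t) = p g(t)` gives
`L₋₁ Z = (x - y) ^ p · (p (x + y) + ((6 - κ) x + (κ - 2) y) / κ) = (x - y) ^ p · (4 - κ) (x - y) / κ`.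
-/

lemma deriv_comp_sub_add_deriv_comp_const_sub (g : ℝ → ℝ) (x y : ℝ) :
    deriv (fun x' => g (x' - y)) x + deriv (fun y' => g (x - y')) y = 0 := by
  rw [deriv_comp_sub_const, deriv_comp_const_sub, add_neg_cancel]

lemma sq_mul_deriv_comp_sub_add_sq_mul_deriv_comp_const_sub (g : ℝ → ℝ) (x y : ℝ) :
    x ^ 2 * deriv (fun x' => g (x' - y)) x + y ^ 2 * deriv (fun y' => g (x - y')) y
      = (x + y) * ((x - y) * deriv g (x - y)) := by
  rw [deriv_comp_sub_const, deriv_comp_const_sub]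
  ring

lemma mul_deriv_rpow_const {t : ℝ} (ht : t ≠ 0) (p : ℝ) :
    t * deriv (fun t => t ^ p) t = p * t ^ p := by
  rw [Real.deriv_rpow_const, Real.rpow_sub_one ht]
  field_simp

/-- With `h_x = (6-κ)/(2κ)`, `h_y = (κ-2)/(2κ)` one has
`L₋₁ Z = ((4-κ)/κ)(x-y)^{1-2/κ} = W`, `L₁ W = 0`, and for `κ ≠ 4` the singular
vector `W = L₋₁ Z` is nonzero. -/
theorem stmt_6 (κ : ℝ) (hκ : 0 < κ) :
    (∀ x y : ℝ, y < x →
        x ^ 2 * deriv (fun x' => Z6 κ x' y) x + y ^ 2 * deriv (fun y' => Z6 κ x y') y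
            + 2 * x * ((6 - κ) / (2 * κ)) * Z6 κ x y
            + 2 * y * ((κ - 2) / (2 * κ)) * Z6 κ x y
          = W6 κ x y)
    ∧ (∀ x y : ℝ, y < x →
        deriv (fun x' => W6 κ x' y) x + deriv (fun y' => W6 κ x y') y = 0)
    ∧ (κ ≠ 4 → ∃ x y : ℝ, y < x ∧ W6 κ x y ≠ 0) := by
  refine ⟨fun x y hxy => ?_, fun x y _ => ?_, fun hκ4 => ⟨1, 0, one_pos, ?_⟩⟩
  · have ht : x - y ≠ 0 := sub_ne_zero.mpr hxy.ne'
    unfold Z6 W6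
    rw [sq_mul_deriv_comp_sub_add_sq_mul_deriv_comp_const_sub (· ^ (-2 / κ)),
      mul_deriv_rpow_const ht,
      show 1 - 2 / κ = -2 / κ + 1 by ring, Real.rpow_add_one ht]
    field_simp
    ring
  · exact deriv_comp_sub_add_deriv_comp_const_sub (fun t => (4 - κ) / κ * t ^ (1 - 2 / κ)) x y
  · rw [W6, sub_zero, Real.one_rpow, mul_one]
    exact div_ne_zero (sub_ne_zero.mpr hκ4.symm) hκ.ne'
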